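/- arXiv:1910.05060 — 2 statements merged into one kernel-verified Lean document; each statement's English description precedes it below -/
import Mathlib

section
/- For every n ∈ ℕ, the law η_n of the nonlinear chain equals the conditional law of the killed Euler chain given survival: η_n = Law(Z̃_n | T̃ > nγ). -/
open MeasureTheory ProbabilityTheory Real Filter
open scoped ENNReal NNReal BigOperators

noncomputable section

/-- The flat `d`-dimensional torus. -/
abbrev Torus (d : ℕ) : Type := Fin d → AddCircle (1 : ℝ)

/-- Canonical projection from `ℝ^d` to the torus. -/
def Torus.proj {d : ℕ} (v : Fin d → ℝ) : Torus d := fun i => (v i : AddCircle (1 : ℝ))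

/-- The geodesic (Euclidean) distance on the torus. -/
def tdist {d : ℕ} (x y : Torus d) : ℝ := Real.sqrt (∑ i, (dist (x i) (y i)) ^ 2)

/-- The corresponding `ℓ²` distance on `(𝕋^d)^N`. -/
def tdistN {d N : ℕ} (x y : Fin N → Torus d) : ℝ := Real.sqrt (∑ i, (tdist (x i) (y i)) ^ 2)

/-- `b` is a `C¹` vector field on the torus: its periodic lift is `C¹`. -/
def IsC1Drift {d : ℕ} (b : Torus d → Fin d → ℝ) : Prop :=
  ContDiff ℝ 1 (fun v : Fin d → ℝ => b (Torus.proj v))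

/-- `λ` is Lipschitz with constant `L` for the geodesic distance. -/
def LipDrift {d : ℕ} (L : ℝ) (lam : Torus d → ℝ) : Prop :=
  ∀ x y, |lam x - lam y| ≤ L * tdist x y

/-- The standard Gaussian distribution `N(0, I_d)` on `ℝ^d`. -/
def stdGaussian (d : ℕ) : Measure (Fin d → ℝ) := Measure.pi fun _ => gaussianReal 0 1

/-- The exponential distribution `E(1)` on `ℝ`. -/
def expLaw : Measure ℝ := volume.withDensity (exponentialPDF 1)

/-- The uniform distribution on `[0,1]`. -/
def unifLaw : Measure ℝ := volume.restrict (Set.Icc (0 : ℝ) 1)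

/-- The Euler–Maruyama transition kernel `K`:
`K(x,·)` is the law of `x + γ b(x) + √γ G` modulo `ℤ^d`, `G ~ N(0, I_d)`. -/
def eulerK {d : ℕ} (b : Torus d → Fin d → ℝ) (γ : ℝ) (x : Torus d) : Measure (Torus d) :=
  (stdGaussian d).map (fun g => x + Torus.proj (fun i => γ * b x i + Real.sqrt γ * g i))

/-- The killing probability at `z`: `p(z) = 1 - exp(-γ λ(z))`. -/
def pkill {d : ℕ} (lam : Torus d → ℝ) (γ : ℝ) (z : Torus d) : ℝ :=
  1 - Real.exp (-(γ * lam z))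

/-- The rebirth kernel `Q_μ`: `Q_μ(x,·)` is the law of `X_H` where `X₀ ~ K(x,·)`,
`X_k ~ μK` for `k ≥ 1`, `U_k ~ U([0,1])` all independent and
`H = inf {k | U_k ≥ p(X_k)}`.  It is given by the explicit formula
`Q_μ f (x) = K[f(1-p)](x) + ∑_{k ≥ 1} μK[f(1-p)] (μK p)^(k-1) K p(x)`. -/
def Qker {d : ℕ} (b : Torus d → Fin d → ℝ) (lam : Torus d → ℝ) (γ : ℝ)
    (μ : Measure (Torus d)) (x : Torus d) : Measure (Torus d) :=
  (eulerK b γ x).withDensity (fun z => ENNReal.ofReal (1 - pkill lam γ z))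
    + ((∫⁻ z, ENNReal.ofReal (pkill lam γ z) ∂(eulerK b γ x))
        * ∑' k : ℕ, (∫⁻ z, ENNReal.ofReal (pkill lam γ z) ∂(μ.bind (eulerK b γ))) ^ k)
      • ((μ.bind (eulerK b γ)).withDensity (fun z => ENNReal.ofReal (1 - pkill lam γ z)))

/-- The nonlinear chain of laws `η_{n+1} = η_n Q_{η_n}`. -/
def etaChain {d : ℕ} (b : Torus d → Fin d → ℝ) (lam : Torus d → ℝ) (γ : ℝ)
    (η0 : Measure (Torus d)) : ℕ → Measure (Torus d)
  | 0 => η0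
  | n + 1 => (etaChain b lam γ η0 n).bind (Qker b lam γ (etaChain b lam γ η0 n))

/-- The empirical measure `π(x) = N⁻¹ ∑ δ_{x_i}`. -/
def emp {d N : ℕ} (x : Fin N → Torus d) : Measure (Torus d) :=
  (N : ℝ≥0∞)⁻¹ • ∑ i, Measure.dirac (x i)

/-- The mean-field particle kernel `R_{N,γ}(x,·) = ⊗_i Q_{π(x)}(x_i,·)`. -/
def Rker {d : ℕ} (b : Torus d → Fin d → ℝ) (lam : Torus d → ℝ) (γ : ℝ) {N : ℕ}
    (x : Fin N → Torus d) : Measure (Fin N → Torus d) :=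
  Measure.pi fun i => Qker b lam γ (emp x) (x i)

/-- Iterated action of a kernel on a measure: `μ ↦ μ R^m`. -/
def iterK {E : Type*} [MeasurableSpace E] (R : E → Measure E) : ℕ → Measure E → Measure E
  | 0, μ => μ
  | m + 1, μ => (iterK R m μ).bind R

/-- The set of couplings of `μ` and `ν`. -/
def Coupling {E : Type*} [MeasurableSpace E] (μ ν : Measure E) : Set (Measure (E × E)) :=
  {P | IsProbabilityMeasure P ∧ P.map Prod.fst = μ ∧ P.map Prod.snd = ν}

/-- The Wasserstein distance associated to a cost `ρ`:
`W_ρ(μ,ν) = inf { E[ρ(X,Y)] : X ~ μ, Y ~ ν }`. -/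
def Wass {E : Type*} [MeasurableSpace E] (ρ : E → E → ℝ) (μ ν : Measure E) : ℝ :=
  sInf ((fun P : Measure (E × E) => ∫ z, ρ z.1 z.2 ∂P) '' Coupling μ ν)

/-- The distance `ρ(x,y) = (1 - e^{-a|x-y|})/a`. -/
def rho {d : ℕ} (a : ℝ) (x y : Torus d) : ℝ := (1 - Real.exp (-a * tdist x y)) / a

/-- The distance `ρ_N(x,y) = ∑_i ρ(x_i,y_i)` on `(𝕋^d)^N`. -/
def rhoN {d : ℕ} (a : ℝ) {N : ℕ} (x y : Fin N → Torus d) : ℝ := ∑ i, rho a (x i) (y i)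

/-- The rate `α(N)` of convergence of empirical measures. -/
def alphaRate (d N : ℕ) : ℝ :=
  if d = 1 then (N : ℝ) ^ (-(1/2 : ℝ))
  else if d = 2 then (N : ℝ) ^ (-(1/2 : ℝ)) * Real.log (1 + (N : ℝ))
  else (N : ℝ) ^ (-(1 / (d : ℝ)))

/-- The contraction property of the Euler kernel in `W_ρ` (Majka's estimate). -/
def EulerContract {d : ℕ} (b : Torus d → Fin d → ℝ) (a c₁ γ₀ : ℝ) : Prop :=
  ∀ γ ∈ Set.Ioc (0 : ℝ) γ₀, ∀ μ ν : Measure (Torus d),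
    IsProbabilityMeasure μ → IsProbabilityMeasure ν →
      Wass (rho a) (μ.bind (eulerK b γ)) (ν.bind (eulerK b γ)) ≤ (1 - c₁ * γ) * Wass (rho a) μ ν

/-- κ = c₁ - c₂ L_λ e^{γ ‖λ‖_∞}. -/
def kap {d : ℕ} (lam : Torus d → ℝ) (c₁ c₂ L γ : ℝ) : ℝ :=
  c₁ - c₂ * L * Real.exp (γ * ⨆ z, lam z)

/-- The uniform contraction of the particle system `R_{N,γ}` in `W_{ρ_N}`. -/
def RContract {d : ℕ} (b : Torus d → Fin d → ℝ) (lam : Torus d → ℝ)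
    (a c₁ c₂ L γ₀ : ℝ) : Prop :=
  ∀ γ ∈ Set.Ioc (0 : ℝ) γ₀, ∀ N : ℕ, ∀ μ ν : Measure (Fin N → Torus d),
    IsProbabilityMeasure μ → IsProbabilityMeasure ν →
      Wass (rhoN a) (μ.bind (Rker b lam γ)) (ν.bind (Rker b lam γ))
        ≤ (1 - γ * kap lam c₁ c₂ L γ) * Wass (rhoN a) μ ν


/-- Index type for the sources of randomness of the killed Euler scheme:
`none ↦ E`, `some none ↦ Z₀`, `some (some n) ↦ G_n`. -/
def srcType (d : ℕ) : Option (Option ℕ) → Type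
  | none => ℝ
  | some none => Torus d
  | some (some _) => Fin d → ℝ

def srcMS (d : ℕ) : ∀ i, MeasurableSpace (srcType d i)
  | none => (inferInstance : MeasurableSpace ℝ)
  | some none => (inferInstance : MeasurableSpace (Torus d))
  | some (some _) => (inferInstance : MeasurableSpace (Fin d → ℝ))

def srcFam {d : ℕ} {Ω : Type*} (Z0 : Ω → Torus d) (G : ℕ → Ω → Fin d → ℝ) (Ev : Ω → ℝ) :
    ∀ i, Ω → srcType d i
  | none => Ev
  | some none => Z0
  | some (some n) => G n

/-- The death time `T̃ = inf { nγ : n ≥ 1, E ≤ γ ∑_{k=1}^n λ(Z̃_k) }` (`∞` if no such time). -/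
def deathTime {d : ℕ} {Ω : Type*} (lam : Torus d → ℝ) (γ : ℝ)
    (Z : ℕ → Ω → Torus d) (Ev : Ω → ℝ) (ω : Ω) : ℝ≥0∞ :=
  ⨅ (n : ℕ) (_ : 1 ≤ n ∧ Ev ω ≤ γ * ∑ k ∈ Finset.Icc 1 n, lam (Z k ω)),
    ENNReal.ofReal ((n : ℝ) * γ)

/-!
Let `νₙ` be the law of `Z̃ₙ` weighted by `exp (-γ ∑_{k=1}^n λ(Z̃ₖ))`, the unnormalised
Feynman–Kac measure. Up to a null set, survival past `nγ` is the event `γ ∑_{k=1}^n λ(Z̃ₖ) < E`;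
since `E ~ Exp(1)` is independent of the chain, restricting to it produces exactly that weight,
so `Law(Z̃ₙ | T̃ > nγ) = νₙ / νₙ(1)`. Since `Gₙ` is independent of `(Z̃ₙ, ∑_{k ≤ n} λ(Z̃ₖ))`,
`νₙ₊₁ = (νₙ K)(1 - p)`. Summing the geometric series over the number of rebirths gives
`μ Q_μ = (μK)(1 - p) / (μK)(1 - p)(1)`: a step of the nonlinear chain is the same linear step
followed by a normalisation, and normalising commutes with linear steps, so `ηₙ = νₙ / νₙ(1)`.
-/

lemma Torus.isOpenQuotientMap_proj {d : ℕ} : IsOpenQuotientMap (Torus.proj (d := d)) :=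
  IsOpenQuotientMap.piMap fun _ => QuotientAddGroup.isOpenQuotientMap_mk

lemma IsC1Drift.continuous {d : ℕ} {b : Torus d → Fin d → ℝ} (hb : IsC1Drift b) : Continuous b :=
  Torus.isOpenQuotientMap_proj.continuous_comp_iff.mp (ContDiff.continuous hb)

namespace KilledEuler

section Measure

variable {α β δ : Type*} [MeasurableSpace α] [MeasurableSpace β] [MeasurableSpace δ]

def normalize (μ : Measure α) : Measure α := (μ Set.univ)⁻¹ • μ

lemma normalize_smul (μ : Measure α) {c : ℝ≥0∞} (hc0 : c ≠ 0) (hcT : c ≠ ∞) :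
    normalize (c • μ) = normalize μ := by
  rw [normalize, normalize, Measure.smul_apply, smul_smul, smul_eq_mul,
    ENNReal.mul_inv (Or.inl hc0) (Or.inl hcT), mul_comm c⁻¹, mul_assoc,
    ENNReal.inv_mul_cancel hc0 hcT, mul_one]

lemma normalize_eq_self (μ : Measure α) [IsProbabilityMeasure μ] : normalize μ = μ := by
  rw [normalize, measure_univ, inv_one, one_smul]

lemma isProbabilityMeasure_normalize {μ : Measure α} (h0 : μ Set.univ ≠ 0) (hT : μ Set.univ ≠ ∞) :
    IsProbabilityMeasure (normalize μ) :=
  ⟨by rw [normalize, Measure.smul_apply, smul_eq_mul, ENNReal.inv_mul_cancel h0 hT]⟩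

lemma map_cond_eq_normalize (μ : Measure α) (s : Set α) {X : α → β} (hX : Measurable X) :
    (μ[|s]).map X = normalize ((μ.restrict s).map X) := by
  rw [ProbabilityTheory.cond, Measure.map_smul, normalize, Measure.map_apply hX .univ,
    Set.preimage_univ, Measure.restrict_apply_univ]

lemma lintegral_ne_zero_of_forall_pos {μ : Measure α} (hμ : μ ≠ 0) {f : α → ℝ≥0∞}
    (hf : Measurable f) (hpos : ∀ x, 0 < f x) : ∫⁻ x, f x ∂μ ≠ 0 := by
  refine ((lintegral_pos_iff_support hf).mpr ?_).ne'
  rw [Function.support_eq_univ fun x => (hpos x).ne']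
  exact pos_iff_ne_zero.mpr (Measure.measure_univ_ne_zero.mpr hμ)

lemma measurable_map_of_uncurry (ν : Measure β) [SFinite ν] {F : α → β → δ}
    (hF : Measurable (Function.uncurry F)) : Measurable fun x => ν.map (F x) := by
  refine Measure.measurable_of_measurable_coe _ fun s hs => ?_
  have h : ∀ x, ν.map (F x) s = ν (Prod.mk x ⁻¹' (Function.uncurry F ⁻¹' s)) := fun x =>
    Measure.map_apply (hF.comp measurable_prodMk_left) hs
  simp_rw [h]
  exact measurable_measure_prodMk_left (hF hs)

lemma map_withDensity_comp (μ : Measure α) {X : α → β} (hX : Measurable X) {g : β → ℝ≥0∞}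
    (hg : Measurable g) : (μ.withDensity (g ∘ X)).map X = (μ.map X).withDensity g := by
  ext A hA
  rw [Measure.map_apply hX hA, withDensity_apply _ (hX hA), withDensity_apply _ hA,
    setLIntegral_map hA hg hX]
  rfl

end Measure

section Independence

variable {Ω α β δ ε : Type*} [MeasurableSpace Ω] [MeasurableSpace α] [MeasurableSpace β]
  [MeasurableSpace δ] [MeasurableSpace ε] {P : Measure Ω}

lemma lintegral_comp_of_indepFun [IsFiniteMeasure P] {W : Ω → α} {Y : Ω → β} (hW : Measurable W)
    (hY : Measurable Y) (hind : IndepFun W Y P) {f : α × β → ℝ≥0∞} (hf : Measurable f) :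
    ∫⁻ ω, f (W ω, Y ω) ∂P = ∫⁻ ω, ∫⁻ y, f (W ω, y) ∂(P.map Y) ∂P := by
  rw [← lintegral_map hf (hW.prodMk hY),
    (indepFun_iff_map_prod_eq_prod_map_map hW.aemeasurable hY.aemeasurable).mp hind,
    lintegral_prod _ hf.aemeasurable, lintegral_map hf.lintegral_prod_right' hW]

lemma map_withDensity_of_indepFun [IsFiniteMeasure P] {X : Ω → α} {V : Ω → β} {Y : Ω → δ}
    (hX : Measurable X) (hV : Measurable V) (hY : Measurable Y)
    (hind : IndepFun (fun ω => (X ω, V ω)) Y P) {f : β → ℝ≥0∞} (hf : Measurable f)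
    {F : α → δ → ε} (hF : Measurable (Function.uncurry F)) :
    (P.withDensity (f ∘ V)).map (fun ω => F (X ω) (Y ω))
      = ((P.withDensity (f ∘ V)).map X).bind fun x => (P.map Y).map (F x) := by
  ext A hA
  have hκA : Measurable fun x => (P.map Y).map (F x) A :=
    (Measure.measurable_coe hA).comp (measurable_map_of_uncurry (P.map Y) hF)
  have hFXY : Measurable fun ω => F (X ω) (Y ω) := hF.comp (hX.prodMk hY)
  have hFA : Measurable fun p : (α × β) × δ => A.indicator (1 : ε → ℝ≥0∞) (F p.1.1 p.2) :=
    (measurable_one.indicator hA).comp (hF.comp (measurable_fst.fst.prodMk measurable_snd))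
  have hinner : ∀ x, ∫⁻ y, A.indicator 1 (F x y) ∂(P.map Y) = (P.map Y).map (F x) A := fun x => by
    rw [← lintegral_map (f := A.indicator 1) (measurable_one.indicator hA)
      (show Measurable (F x) from hF.comp measurable_prodMk_left), lintegral_indicator_one hA]
  calc (P.withDensity (f ∘ V)).map (fun ω => F (X ω) (Y ω)) A
      = ∫⁻ ω, f (V ω) * A.indicator 1 (F (X ω) (Y ω)) ∂P := by
        rw [Measure.map_apply hFXY hA, ← lintegral_indicator_one (hFXY hA),
          lintegral_withDensity_eq_lintegral_mul _ (hf.comp hV)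
            (measurable_one.indicator (hFXY hA))]
        rfl
    _ = ∫⁻ ω, f (V ω) * ∫⁻ y, A.indicator 1 (F (X ω) y) ∂(P.map Y) ∂P := by
        rw [lintegral_comp_of_indepFun (f := fun p => f p.1.2 * A.indicator 1 (F p.1.1 p.2))
          (hX.prodMk hV) hY hind ((hf.comp measurable_fst.snd).mul hFA)]
        dsimp only
        exact lintegral_congr fun ω =>
          lintegral_const_mul _ (hFA.comp (measurable_prodMk_left (x := (X ω, V ω))))
    _ = ((P.withDensity (f ∘ V)).map X).bind (fun x => (P.map Y).map (F x)) A := by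
        simp_rw [hinner]
        rw [Measure.bind_apply hA (measurable_map_of_uncurry (P.map Y) hF).aemeasurable,
          lintegral_map hκA hX,
          lintegral_withDensity_eq_lintegral_mul (g := fun ω => (P.map Y).map (F (X ω)) A) _
            (hf.comp hV) (hκA.comp hX)]
        rfl

lemma _root_.ProbabilityTheory.iIndepFun.indepFun_of_measurable_iSup {ι : Type*} {β : ι → Type*}
    {m : ∀ i, MeasurableSpace (β i)} {f : ∀ i, Ω → β i} (hf : iIndepFun f P)
    (hmeas : ∀ i, Measurable (f i)) {S : Set ι} {j : ι} (hj : j ∉ S) {W : Ω → α}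
    (hW : Measurable[⨆ i ∈ S, (m i).comap (f i)] W) : IndepFun W (f j) P := by
  rw [IndepFun_iff_Indep]
  have hST := indep_iSup_of_disjoint (fun i => (hmeas i).comap_le) hf.iIndep
    (Set.disjoint_singleton_right.mpr hj)
  exact indep_of_indep_of_le_right (indep_of_indep_of_le_left hST hW.comap_le)
    (le_iSup₂ (f := fun i (_ : i ∈ ({j} : Set ι)) => (m i).comap (f i)) j rfl)

end Independence

section ExponentialClock

variable {Ω α : Type*} [MeasurableSpace Ω] [MeasurableSpace α] {P : Measure Ω}

instance : IsProbabilityMeasure expLaw :=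
  ⟨by rw [expLaw, withDensity_apply _ .univ, Measure.restrict_univ,
    lintegral_exponentialPDF_eq_one zero_lt_one]⟩

lemma expLaw_Iic_zero : expLaw (Set.Iic 0) = 0 := by
  rw [expLaw, withDensity_apply _ measurableSet_Iic,
    lintegral_exponentialPDF_eq_antiDeriv zero_lt_one]
  simp

lemma expLaw_Ioi {t : ℝ} (ht : 0 ≤ t) : expLaw (Set.Ioi t) = ENNReal.ofReal (exp (-t)) := by
  rw [← Set.compl_Iic, prob_compl_eq_one_sub measurableSet_Iic, expLaw,
    withDensity_apply _ measurableSet_Iic, lintegral_exponentialPDF_eq_antiDeriv zero_lt_one,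
    if_pos ht, one_mul, ← ENNReal.ofReal_one,
    ← ENNReal.ofReal_sub _ (sub_nonneg.mpr (exp_le_one_iff.mpr (neg_nonpos.mpr ht))),
    sub_sub_cancel]

lemma map_restrict_lt_of_indepFun [IsFiniteMeasure P] {X : Ω → α} {S E : Ω → ℝ}
    (hX : Measurable X) (hS : Measurable S) (hE : Measurable E) (hS0 : ∀ ω, 0 ≤ S ω)
    (hind : IndepFun (fun ω => (X ω, S ω)) E P) (hlaw : P.map E = expLaw) :
    (P.restrict {ω | S ω < E ω}).map X
      = (P.withDensity fun ω => ENNReal.ofReal (exp (-S ω))).map X := by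
  ext A hA
  have hg : Measurable fun p : (α × ℝ) × ℝ =>
      A.indicator (1 : α → ℝ≥0∞) p.1.1 * (Set.Ioi p.1.2).indicator 1 p.2 :=
    ((measurable_one.indicator hA).comp measurable_fst.fst).mul
      (measurable_one.indicator (measurableSet_lt measurable_fst.snd measurable_snd))
  rw [Measure.map_apply hX hA, Measure.restrict_apply (hX hA), Measure.map_apply hX hA,
    withDensity_apply _ (hX hA), ← lintegral_indicator_one ((hX hA).inter (measurableSet_lt hS hE))]
  calc ∫⁻ ω, (X ⁻¹' A ∩ {ω | S ω < E ω}).indicator 1 ω ∂P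
      = ∫⁻ ω, A.indicator 1 (X ω) * (Set.Ioi (S ω)).indicator 1 (E ω) ∂P := by
        refine lintegral_congr fun ω => ?_
        by_cases h1 : X ω ∈ A <;> by_cases h2 : S ω < E ω <;> simp [h1, h2]
    _ = ∫⁻ ω, A.indicator 1 (X ω) * expLaw (Set.Ioi (S ω)) ∂P := by
        rw [lintegral_comp_of_indepFun (hX.prodMk hS) hE hind hg, hlaw]
        refine lintegral_congr fun ω => ?_
        dsimp only
        rw [lintegral_const_mul _ (measurable_one.indicator measurableSet_Ioi),
          lintegral_indicator_one measurableSet_Ioi]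
    _ = ∫⁻ ω in X ⁻¹' A, ENNReal.ofReal (exp (-S ω)) ∂P := by
        rw [← lintegral_indicator (hX hA)]
        refine lintegral_congr fun ω => ?_
        rw [expLaw_Ioi (hS0 ω)]
        by_cases h : X ω ∈ A <;> simp [h]

end ExponentialClock

section EulerScheme

variable {d : ℕ} {b : Torus d → Fin d → ℝ} {lam : Torus d → ℝ} {γ : ℝ}

instance (d : ℕ) : IsProbabilityMeasure (stdGaussian d) := by
  unfold _root_.stdGaussian; infer_instance

def eulerStep (b : Torus d → Fin d → ℝ) (γ : ℝ) (x : Torus d) (g : Fin d → ℝ) : Torus d :=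
  x + Torus.proj fun i => γ * b x i + √γ * g i

lemma measurable_eulerStep (hb : Measurable b) : Measurable (Function.uncurry (eulerStep b γ)) :=
  measurable_fst.add <| Torus.isOpenQuotientMap_proj.continuous.measurable.comp <|
    measurable_pi_lambda _ fun i =>
      ((measurable_pi_apply i).comp (hb.comp measurable_fst)).const_mul γ |>.add
        (((measurable_pi_apply i).comp measurable_snd).const_mul _)

lemma measurable_eulerK (hb : Measurable b) : Measurable (eulerK b γ) :=
  measurable_map_of_uncurry (stdGaussian d) (measurable_eulerStep hb)

lemma isProbabilityMeasure_bind_eulerK (hb : Measurable b) (μ : Measure (Torus d))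
    [IsProbabilityMeasure μ] : IsProbabilityMeasure (μ.bind (eulerK b γ)) := by
  have hK : ∀ x, IsProbabilityMeasure (eulerK b γ x) := fun x =>
    Measure.isProbabilityMeasure_map
      ((measurable_eulerStep hb).comp measurable_prodMk_left).aemeasurable
  constructor
  simp [Measure.bind_apply .univ (measurable_eulerK hb).aemeasurable]

def survivalProb (lam : Torus d → ℝ) (γ : ℝ) (z : Torus d) : ℝ≥0∞ :=
  ENNReal.ofReal (exp (-(γ * lam z)))

lemma ofReal_one_sub_pkill :
    (fun z => ENNReal.ofReal (1 - pkill lam γ z)) = survivalProb lam γ := by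
  funext z
  rw [pkill, sub_sub_cancel, survivalProb]

lemma ofReal_pkill_add_survivalProb (hlam0 : ∀ z, 0 ≤ lam z) (hγ : 0 ≤ γ) (z : Torus d) :
    ENNReal.ofReal (pkill lam γ z) + survivalProb lam γ z = 1 := by
  have hp : 0 ≤ pkill lam γ z :=
    sub_nonneg.mpr (exp_le_one_iff.mpr (neg_nonpos.mpr (mul_nonneg hγ (hlam0 z))))
  rw [survivalProb, ← ENNReal.ofReal_add hp (exp_nonneg _), pkill, sub_add_cancel,
    ENNReal.ofReal_one]

lemma measurable_survivalProb (hlam : Measurable lam) : Measurable (survivalProb lam γ) :=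
  ENNReal.measurable_ofReal.comp (((hlam.const_mul γ).neg).exp)

lemma measurable_ofReal_pkill (hlam : Measurable lam) :
    Measurable fun z => ENNReal.ofReal (pkill lam γ z) :=
  ENNReal.measurable_ofReal.comp (measurable_const.sub ((hlam.const_mul γ).neg).exp)

lemma Qker_apply (μ : Measure (Torus d)) (x : Torus d) {A : Set (Torus d)} (hA : MeasurableSet A) :
    Qker b lam γ μ x A = ∫⁻ z, A.indicator (survivalProb lam γ) z ∂eulerK b γ x
      + (∫⁻ z, ENNReal.ofReal (pkill lam γ z) ∂eulerK b γ x)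
        * (∑' k : ℕ, (∫⁻ z, ENNReal.ofReal (pkill lam γ z) ∂μ.bind (eulerK b γ)) ^ k)
        * (μ.bind (eulerK b γ)).withDensity (survivalProb lam γ) A := by
  rw [Qker, ofReal_one_sub_pkill, Measure.add_apply, Measure.smul_apply, smul_eq_mul,
    withDensity_apply _ hA, lintegral_indicator hA]

lemma measurable_Qker (hb : Measurable b) (hlam : Measurable lam) (μ : Measure (Torus d)) :
    Measurable (Qker b lam γ μ) := by
  refine Measure.measurable_of_measurable_coe _ fun A hA => ?_
  simp_rw [Qker_apply μ _ hA]
  exact ((Measure.measurable_lintegral ((measurable_survivalProb hlam).indicator hA)).comp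
    (measurable_eulerK hb)).add <| (((Measure.measurable_lintegral
      (measurable_ofReal_pkill hlam)).comp (measurable_eulerK hb)).mul_const _).mul_const _

lemma bind_Qker (hb : Measurable b) (hlam : Measurable lam) (hlam0 : ∀ z, 0 ≤ lam z)
    (hγ : 0 ≤ γ) (μ : Measure (Torus d)) [IsProbabilityMeasure μ] :
    μ.bind (Qker b lam γ μ)
      = normalize ((μ.bind (eulerK b γ)).withDensity (survivalProb lam γ)) := by
  have := isProbabilityMeasure_bind_eulerK (γ := γ) hb μ
  set ν := μ.bind (eulerK b γ) with hν
  set q := ∫⁻ z, ENNReal.ofReal (pkill lam γ z) ∂ν with hq_def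
  set r := ∫⁻ z, survivalProb lam γ z ∂ν
  have hqr : q + r = 1 := by
    rw [← lintegral_add_left (measurable_ofReal_pkill hlam)]
    simp [ofReal_pkill_add_survivalProb hlam0 hγ]
  have hq : q ≠ ∞ := ne_top_of_le_ne_top ENNReal.one_ne_top (hqr ▸ le_self_add)
  have hr : r ≠ 0 := lintegral_ne_zero_of_forall_pos (IsProbabilityMeasure.ne_zero ν)
    (measurable_survivalProb hlam) fun z => ENNReal.ofReal_pos.mpr (exp_pos _)
  -- the number of rebirths before survival is geometric
  have hgeom : ∑' k : ℕ, q ^ k = r⁻¹ := by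
    rw [ENNReal.tsum_geometric, ENNReal.sub_eq_of_eq_add hq (by rw [← hqr, add_comm])]
  have hgeom_succ : 1 + q * r⁻¹ = r⁻¹ := by
    rw [← hgeom, ← ENNReal.tsum_mul_left, tsum_eq_zero_add' ENNReal.summable (f := (q ^ ·))]
    simp only [pow_zero, pow_succ']
  ext A hA
  have hsurv : ∫⁻ x, ∫⁻ z, A.indicator (survivalProb lam γ) z ∂eulerK b γ x ∂μ
      = ν.withDensity (survivalProb lam γ) A := by
    rw [← Measure.lintegral_bind (measurable_eulerK hb).aemeasurable
      ((measurable_survivalProb hlam).indicator hA).aemeasurable, withDensity_apply _ hA,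
      lintegral_indicator hA]
  have hkill : ∫⁻ x, ∫⁻ z, ENNReal.ofReal (pkill lam γ z) ∂eulerK b γ x ∂μ = q :=
    (Measure.lintegral_bind (measurable_eulerK hb).aemeasurable
      (measurable_ofReal_pkill hlam).aemeasurable).symm
  have hpkill : Measurable fun x => ∫⁻ z, ENNReal.ofReal (pkill lam γ z) ∂eulerK b γ x :=
    (Measure.measurable_lintegral (measurable_ofReal_pkill hlam)).comp (measurable_eulerK hb)
  rw [Measure.bind_apply hA (measurable_Qker hb hlam μ).aemeasurable]
  simp_rw [Qker_apply μ _ hA, ← hν, ← hq_def]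
  rw [lintegral_add_left (f := fun x => ∫⁻ z, A.indicator (survivalProb lam γ) z ∂eulerK b γ x)
      ((Measure.measurable_lintegral ((measurable_survivalProb hlam).indicator hA)).comp
        (measurable_eulerK hb)),
    lintegral_mul_const _ (hpkill.mul_const _), lintegral_mul_const _ hpkill, hsurv, hkill, hgeom,
    normalize, Measure.smul_apply, smul_eq_mul, withDensity_apply _ .univ, Measure.restrict_univ]
  calc ν.withDensity (survivalProb lam γ) A + q * r⁻¹ * ν.withDensity (survivalProb lam γ) A
      = (1 + q * r⁻¹) * ν.withDensity (survivalProb lam γ) A := by ring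
    _ = r⁻¹ * ν.withDensity (survivalProb lam γ) A := by rw [hgeom_succ]

end EulerScheme

section Chain

variable {d : ℕ} {b : Torus d → Fin d → ℝ} {lam : Torus d → ℝ} {γ : ℝ}
  {Ω : Type*} {Z : ℕ → Ω → Torus d} {G : ℕ → Ω → Fin d → ℝ} {Ev : Ω → ℝ}

attribute [local instance] srcMS

def killingSum (lam : Torus d → ℝ) (γ : ℝ) (Z : ℕ → Ω → Torus d) (n : ℕ) (ω : Ω) : ℝ :=
  γ * ∑ k ∈ Finset.Icc 1 n, lam (Z k ω)

lemma killingSum_zero (ω : Ω) : killingSum lam γ Z 0 ω = 0 := by simp [killingSum]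

lemma killingSum_succ (n : ℕ) (ω : Ω) :
    killingSum lam γ Z (n + 1) ω = killingSum lam γ Z n ω + γ * lam (Z (n + 1) ω) := by
  rw [killingSum, killingSum, Finset.sum_Icc_succ_top (Nat.le_add_left 1 n), mul_add]

lemma killingSum_mono (hlam0 : ∀ z, 0 ≤ lam z) (hγ : 0 ≤ γ) (ω : Ω) :
    Monotone fun n => killingSum lam γ Z n ω := fun _ _ hmn =>
  mul_le_mul_of_nonneg_left (Finset.sum_le_sum_of_subset_of_nonneg
    (Finset.Icc_subset_Icc_right hmn) fun _ _ _ => hlam0 _) hγ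

lemma killingSum_nonneg (hlam0 : ∀ z, 0 ≤ lam z) (hγ : 0 ≤ γ) (n : ℕ) (ω : Ω) :
    0 ≤ killingSum lam γ Z n ω :=
  killingSum_zero (lam := lam) (γ := γ) (Z := Z) ω ▸ killingSum_mono hlam0 hγ ω (Nat.zero_le n)

lemma ofReal_lt_deathTime_iff (hlam0 : ∀ z, 0 ≤ lam z) (hγ : 0 < γ) {ω : Ω} (hEω : 0 < Ev ω)
    (n : ℕ) :
    ENNReal.ofReal (n * γ) < deathTime lam γ Z Ev ω ↔ killingSum lam γ Z n ω < Ev ω := by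
  constructor
  · intro hlt
    by_contra! hle
    have hn : 1 ≤ n := Nat.one_le_iff_ne_zero.mpr fun h0 => by
      rw [h0, killingSum_zero] at hle
      exact hle.not_gt hEω
    exact hlt.not_ge (iInf₂_le n ⟨hn, hle⟩)
  · intro hlt
    refine lt_of_lt_of_le (b := ENNReal.ofReal ((n + 1) * γ))
      ((ENNReal.ofReal_lt_ofReal_iff (by positivity)).mpr (by linarith))
      (le_iInf₂ fun m hm => ENNReal.ofReal_le_ofReal ?_)
    have hnm : n < m := by
      by_contra! hmn
      exact (hm.2.trans (killingSum_mono hlam0 hγ.le ω hmn)).not_gt hlt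
    exact mul_le_mul_of_nonneg_right (by exact_mod_cast hnm) hγ.le

-- the indices of `Z̃₀, G₀, …, Gₙ₋₁` in `srcFam`
def pastIdx (n : ℕ) : Set (Option (Option ℕ)) :=
  insert (some none) ((fun j => some (some j)) '' Set.Iio n)

abbrev pastSigma (Z0 : Ω → Torus d) (G : ℕ → Ω → Fin d → ℝ) (Ev : Ω → ℝ) (n : ℕ) :
    MeasurableSpace Ω :=
  ⨆ i ∈ pastIdx n, (srcMS d i).comap (srcFam Z0 G Ev i)

lemma comap_le_pastSigma {n : ℕ} {i : Option (Option ℕ)} (hi : i ∈ pastIdx n) :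
    (srcMS d i).comap (srcFam (Z 0) G Ev i) ≤ pastSigma (Z 0) G Ev n :=
  le_iSup₂ (f := fun i (_ : i ∈ pastIdx n) => (srcMS d i).comap (srcFam (Z 0) G Ev i)) i hi

lemma pastSigma_mono : Monotone (pastSigma (d := d) (Z 0) G Ev) := fun _ _ hmn =>
  biSup_mono fun _ hi => Set.insert_subset_insert (Set.image_mono (Set.Iio_subset_Iio hmn)) hi

lemma measurable_Z_of_adapted {𝓕 : ℕ → MeasurableSpace Ω} (h𝓕 : Monotone 𝓕)
    (hb : Measurable b) (hrec : ∀ n ω, Z (n + 1) ω = eulerStep b γ (Z n ω) (G n ω))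
    (hZ0 : Measurable[𝓕 0] (Z 0)) (hG : ∀ n, Measurable[𝓕 (n + 1)] (G n)) (n : ℕ) :
    Measurable[𝓕 n] (Z n) := by
  induction n with
  | zero => exact hZ0
  | succ n ih =>
    rw [show Z (n + 1) = fun ω => eulerStep b γ (Z n ω) (G n ω) from funext (hrec n)]
    exact (measurable_eulerStep hb).comp ((ih.mono (h𝓕 n.le_succ) le_rfl).prodMk (hG n))

lemma measurable_killingSum_of_adapted {𝓕 : ℕ → MeasurableSpace Ω} (h𝓕 : Monotone 𝓕)
    (hb : Measurable b) (hlam : Measurable lam)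
    (hrec : ∀ n ω, Z (n + 1) ω = eulerStep b γ (Z n ω) (G n ω))
    (hZ0 : Measurable[𝓕 0] (Z 0)) (hG : ∀ n, Measurable[𝓕 (n + 1)] (G n)) (n : ℕ) :
    Measurable[𝓕 n] (killingSum lam γ Z n) :=
  (Finset.measurable_sum _ fun k hk => hlam.comp <|
    (measurable_Z_of_adapted h𝓕 hb hrec hZ0 hG k).mono
      (h𝓕 (Finset.mem_Icc.mp hk).2) le_rfl).const_mul γ

lemma measurable_pastSigma_Z0 : Measurable[pastSigma (Z 0) G Ev 0] (Z 0) :=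
  measurable_iff_comap_le.mpr (comap_le_pastSigma (Set.mem_insert _ _))

lemma measurable_pastSigma_G (n : ℕ) : Measurable[pastSigma (Z 0) G Ev (n + 1)] (G n) :=
  measurable_iff_comap_le.mpr
    (comap_le_pastSigma (i := some (some n)) (Set.mem_insert_of_mem _ ⟨n, n.lt_succ_self, rfl⟩))

variable [MeasurableSpace Ω] {P : Measure Ω}

def feynmanKac (lam : Torus d → ℝ) (γ : ℝ) (P : Measure Ω) (Z : ℕ → Ω → Torus d) (n : ℕ) :
    Measure (Torus d) :=
  (P.withDensity fun ω => ENNReal.ofReal (exp (-killingSum lam γ Z n ω))).map (Z n)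

lemma measurable_srcFam (hZ0 : Measurable (Z 0)) (hG : ∀ n, Measurable (G n))
    (hE : Measurable Ev) : ∀ i, Measurable (srcFam (Z 0) G Ev i)
  | none => hE
  | some none => hZ0
  | some (some n) => hG n

lemma measurable_Z (hb : Measurable b)
    (hrec : ∀ n ω, Z (n + 1) ω = eulerStep b γ (Z n ω) (G n ω))
    (hZ0 : Measurable (Z 0)) (hG : ∀ n, Measurable (G n)) (n : ℕ) : Measurable (Z n) :=
  measurable_Z_of_adapted monotone_const hb hrec hZ0 hG n

lemma measurable_killingSum (hb : Measurable b) (hlam : Measurable lam)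
    (hrec : ∀ n ω, Z (n + 1) ω = eulerStep b γ (Z n ω) (G n ω))
    (hZ0 : Measurable (Z 0)) (hG : ∀ n, Measurable (G n)) (n : ℕ) :
    Measurable (killingSum lam γ Z n) :=
  measurable_killingSum_of_adapted monotone_const hb hlam hrec hZ0 hG n

lemma feynmanKac_apply_univ {n : ℕ} (hZn : Measurable (Z n)) :
    feynmanKac lam γ P Z n Set.univ = ∫⁻ ω, ENNReal.ofReal (exp (-killingSum lam γ Z n ω)) ∂P := by
  rw [feynmanKac, Measure.map_apply hZn .univ, Set.preimage_univ, withDensity_apply _ .univ,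
    Measure.restrict_univ]

lemma feynmanKac_apply_univ_ne_zero [NeZero P] {n : ℕ} (hZn : Measurable (Z n))
    (hSn : Measurable (killingSum lam γ Z n)) : feynmanKac lam γ P Z n Set.univ ≠ 0 := by
  rw [feynmanKac_apply_univ hZn]
  exact lintegral_ne_zero_of_forall_pos (NeZero.ne P)
    (ENNReal.measurable_ofReal.comp hSn.neg.exp) fun ω => ENNReal.ofReal_pos.mpr (exp_pos _)

lemma feynmanKac_apply_univ_le_one [IsProbabilityMeasure P] (hlam0 : ∀ z, 0 ≤ lam z)
    (hγ : 0 ≤ γ) {n : ℕ} (hZn : Measurable (Z n)) : feynmanKac lam γ P Z n Set.univ ≤ 1 := by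
  rw [feynmanKac_apply_univ hZn]
  refine (lintegral_mono fun ω => ?_).trans_eq (by rw [lintegral_one, measure_univ])
  exact ENNReal.ofReal_le_one.mpr
    (exp_le_one_iff.mpr (neg_nonpos.mpr (killingSum_nonneg hlam0 hγ n ω)))

section Model

variable (hb : Measurable b) (hlam : Measurable lam)
  (hrec : ∀ n ω, Z (n + 1) ω = eulerStep b γ (Z n ω) (G n ω))
  (hZ0 : Measurable (Z 0)) (hG : ∀ n, Measurable (G n)) (hE : Measurable Ev)
  (hindep : iIndepFun (srcFam (Z 0) G Ev) P)
include hb hlam hrec hZ0 hG hE hindep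

lemma indepFun_past {n : ℕ} {j : Option (Option ℕ)} (hj : j ∉ pastIdx n) :
    IndepFun (fun ω => (Z n ω, killingSum lam γ Z n ω)) (srcFam (Z 0) G Ev j) P :=
  hindep.indepFun_of_measurable_iSup (measurable_srcFam hZ0 hG hE) hj
    ((measurable_Z_of_adapted pastSigma_mono hb hrec measurable_pastSigma_Z0
        measurable_pastSigma_G n).prodMk
      (measurable_killingSum_of_adapted pastSigma_mono hb hlam hrec measurable_pastSigma_Z0
        measurable_pastSigma_G n))

lemma feynmanKac_succ [IsFiniteMeasure P] (hGlaw : ∀ n, P.map (G n) = stdGaussian d) (n : ℕ) :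
    feynmanKac lam γ P Z (n + 1)
      = ((feynmanKac lam γ P Z n).bind (eulerK b γ)).withDensity (survivalProb lam γ) := by
  have hZ := measurable_Z hb hrec hZ0 hG
  have hexp : Measurable fun s : ℝ => ENNReal.ofReal (exp (-s)) :=
    ENNReal.measurable_ofReal.comp measurable_neg.exp
  have hweight : (fun ω => ENNReal.ofReal (exp (-killingSum lam γ Z (n + 1) ω)))
      = (fun ω => ENNReal.ofReal (exp (-killingSum lam γ Z n ω)))
          * (survivalProb lam γ ∘ Z (n + 1)) := by
    funext ω
    rw [Pi.mul_apply, Function.comp_apply, killingSum_succ, neg_add, exp_add,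
      ENNReal.ofReal_mul (exp_nonneg _), survivalProb]
  have hind : IndepFun (fun ω => (Z n ω, killingSum lam γ Z n ω)) (G n) P :=
    indepFun_past hb hlam hrec hZ0 hG hE hindep (j := some (some n))
      fun h => (Set.mem_insert_iff.mp h).elim (by simp) (by simp)
  rw [feynmanKac, hweight, withDensity_mul _
    (f := fun ω => ENNReal.ofReal (exp (-killingSum lam γ Z n ω)))
    (hexp.comp (measurable_killingSum hb hlam hrec hZ0 hG n))
    ((measurable_survivalProb hlam).comp (hZ (n + 1))),
    map_withDensity_comp _ (hZ (n + 1)) (measurable_survivalProb hlam),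
    show Z (n + 1) = fun ω => eulerStep b γ (Z n ω) (G n ω) from funext (hrec n)]
  have hstep := map_withDensity_of_indepFun (hZ n) (measurable_killingSum hb hlam hrec hZ0 hG n)
    (hG n) hind hexp (measurable_eulerStep (γ := γ) hb)
  rw [hGlaw n] at hstep
  exact congrArg (·.withDensity (survivalProb lam γ)) hstep

lemma map_restrict_survival_eq_feynmanKac [IsFiniteMeasure P] (hlam0 : ∀ z, 0 ≤ lam z)
    (hγ : 0 ≤ γ) (hElaw : P.map Ev = expLaw) (n : ℕ) :
    (P.restrict {ω | killingSum lam γ Z n ω < Ev ω}).map (Z n) = feynmanKac lam γ P Z n :=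
  map_restrict_lt_of_indepFun (measurable_Z hb hrec hZ0 hG n)
    (measurable_killingSum hb hlam hrec hZ0 hG n) hE (killingSum_nonneg hlam0 hγ n)
    (indepFun_past hb hlam hrec hZ0 hG hE hindep (j := none) (by simp [pastIdx])) hElaw

lemma etaChain_eq_normalize_feynmanKac [IsProbabilityMeasure P] (hlam0 : ∀ z, 0 ≤ lam z)
    (hγ : 0 ≤ γ) {η0 : Measure (Torus d)} (hZlaw : P.map (Z 0) = η0)
    (hGlaw : ∀ n, P.map (G n) = stdGaussian d) (n : ℕ) :
    etaChain b lam γ η0 n = normalize (feynmanKac lam γ P Z n) := by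
  induction n with
  | zero =>
    have : IsProbabilityMeasure η0 := hZlaw ▸ Measure.isProbabilityMeasure_map hZ0.aemeasurable
    have hfk : feynmanKac lam γ P Z 0 = η0 := by
      simp [feynmanKac, killingSum_zero, hZlaw]
    rw [etaChain, hfk, normalize_eq_self]
  | succ n ih =>
    set c := feynmanKac lam γ P Z n Set.univ
    have hc0 : c ≠ 0 := feynmanKac_apply_univ_ne_zero (measurable_Z hb hrec hZ0 hG n)
      (measurable_killingSum hb hlam hrec hZ0 hG n)
    have hcT : c ≠ ∞ := ne_top_of_le_ne_top ENNReal.one_ne_top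
      (feynmanKac_apply_univ_le_one hlam0 hγ (measurable_Z hb hrec hZ0 hG n))
    have : IsProbabilityMeasure (etaChain b lam γ η0 n) :=
      ih ▸ isProbabilityMeasure_normalize hc0 hcT
    calc etaChain b lam γ η0 (n + 1)
        = normalize (((c⁻¹ • feynmanKac lam γ P Z n).bind (eulerK b γ)).withDensity
            (survivalProb lam γ)) := by
          rw [etaChain, bind_Qker hb hlam hlam0 hγ, ih]
          rfl
      _ = normalize (feynmanKac lam γ P Z (n + 1)) := by
          rw [Measure.bind_smul, withDensity_smul_measure,
            normalize_smul _ (ENNReal.inv_ne_zero.mpr hcT) (ENNReal.inv_ne_top.mpr hc0),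
            feynmanKac_succ hb hlam hrec hZ0 hG hE hindep hGlaw]

end Model

lemma deathTime_gt_ae_eq (hlam0 : ∀ z, 0 ≤ lam z) (hγ : 0 < γ) (hE : Measurable Ev)
    (hElaw : P.map Ev = expLaw) (n : ℕ) :
    {ω | ENNReal.ofReal (n * γ) < deathTime lam γ Z Ev ω}
      =ᵐ[P] {ω | killingSum lam γ Z n ω < Ev ω} := by
  have hpos : ∀ᵐ ω ∂P, 0 < Ev ω := by
    rw [ae_iff]
    simp_rw [not_lt]
    change P (Ev ⁻¹' Set.Iic 0) = 0
    rw [← Measure.map_apply hE measurableSet_Iic, hElaw, expLaw_Iic_zero]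
  filter_upwards [hpos] with ω hω
  exact propext (ofReal_lt_deathTime_iff hlam0 hγ hω n)

end Chain

end KilledEuler

open KilledEuler

theorem nonlinear_chain_eq_conditioned_euler_chain_general
    {d : ℕ} (b : Torus d → Fin d → ℝ) (hb : IsC1Drift b)
    (lam : Torus d → ℝ) (hlamc : Continuous lam) (hlam0 : ∀ z, 0 ≤ lam z)
    (γ : ℝ) (hγ : 0 < γ)
    (η0 : Measure (Torus d))
    {Ω : Type*} [MeasurableSpace Ω] (P : Measure Ω) (hP : IsProbabilityMeasure P)
    (Z : ℕ → Ω → Torus d) (G : ℕ → Ω → Fin d → ℝ) (Ev : Ω → ℝ)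
    (hZmeas : Measurable (Z 0)) (hGmeas : ∀ n, Measurable (G n)) (hEmeas : Measurable Ev)
    (hZ0 : P.map (Z 0) = η0)
    (hrec : ∀ n ω, Z (n + 1) ω
      = Z n ω + Torus.proj (fun i => γ * b (Z n ω) i + Real.sqrt γ * G n ω i))
    (hG : ∀ n, P.map (G n) = stdGaussian d)
    (hE : P.map Ev = expLaw)
    (hindep : iIndepFun (m := srcMS d) (srcFam (Z 0) G Ev) P)
    (n : ℕ) :
    etaChain b lam γ η0 n
      = (P[|{ω | ENNReal.ofReal ((n : ℝ) * γ) < deathTime lam γ Z Ev ω}]).map (Z n) := by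
  have hbm : Measurable b := hb.continuous.measurable
  have hsurvival := deathTime_gt_ae_eq (P := P) (Z := Z) hlam0 hγ hEmeas hE n
  calc etaChain b lam γ η0 n
      = normalize (feynmanKac lam γ P Z n) :=
        etaChain_eq_normalize_feynmanKac hbm hlamc.measurable hrec hZmeas hGmeas hEmeas hindep
          hlam0 hγ.le hZ0 hG n
    _ = normalize ((P.restrict {ω | killingSum lam γ Z n ω < Ev ω}).map (Z n)) := by
        rw [map_restrict_survival_eq_feynmanKac hbm hlamc.measurable hrec hZmeas hGmeas hEmeas
          hindep hlam0 hγ.le hE]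
    _ = (P[|{ω | killingSum lam γ Z n ω < Ev ω}]).map (Z n) :=
        (map_cond_eq_normalize _ _ (measurable_Z hbm hrec hZmeas hGmeas n)).symm
    _ = _ := by
        rw [ProbabilityTheory.cond, ProbabilityTheory.cond, Measure.restrict_congr_set hsurvival,
          measure_congr hsurvival]

/-- For every `n`, the law `η_n` of the nonlinear chain equals the conditional law of the
killed Euler chain given survival: `η_n = Law(Z̃_n | T̃ > nγ)`. -/
theorem nonlinear_chain_eq_conditioned_euler_chain
    {d : ℕ} (b : Torus d → Fin d → ℝ) (hb : IsC1Drift b)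
    (lam : Torus d → ℝ) (hlamc : Continuous lam) (hlam0 : ∀ z, 0 ≤ lam z)
    (γ : ℝ) (hγ : 0 < γ)
    (η0 : Measure (Torus d)) (hη0 : IsProbabilityMeasure η0)
    {Ω : Type*} [MeasurableSpace Ω] (P : Measure Ω) (hP : IsProbabilityMeasure P)
    (Z : ℕ → Ω → Torus d) (G : ℕ → Ω → Fin d → ℝ) (Ev : Ω → ℝ)
    (hZmeas : Measurable (Z 0)) (hGmeas : ∀ n, Measurable (G n)) (hEmeas : Measurable Ev)
    (hZ0 : P.map (Z 0) = η0)
    (hrec : ∀ n ω, Z (n + 1) ω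
      = Z n ω + Torus.proj (fun i => γ * b (Z n ω) i + Real.sqrt γ * G n ω i))
    (hG : ∀ n, P.map (G n) = stdGaussian d)
    (hE : P.map Ev = expLaw)
    (hindep : iIndepFun (m := srcMS d) (srcFam (Z 0) G Ev) P)
    (n : ℕ) :
    etaChain b lam γ η0 n
      = (P[|{ω | ENNReal.ofReal ((n : ℝ) * γ) < deathTime lam γ Z Ev ω}]).map (Z n) :=
  nonlinear_chain_eq_conditioned_euler_chain_general b hb lam hlamc hlam0 γ hγ η0 P hP Z G Ev hZmeas
    hGmeas hEmeas hZ0 hrec hG hE hindep n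

end
end

section
/- With the constant C₂ of the propagation-of-chaos estimate, for all N ∈ ℕ, all γ ∈ (0, γ₀], all m ∈ ℕ, all η₀ ∈ P(𝕋^d) and all k ∈ {1,…,N}, if (X_m) is the particle chain started from η₀^{⊗N} with kernel R_{N,γ}, then W_{ρ_k}(Law(X_{1,m},…,X_{k,m}), η_m^{⊗k}) ≤ C₂ k α(N) γ Σ_{s=1}^m (1 − γκ)^{s−1}, where (X_{1,m},…,X_{k,m}) are the first k coordinates of X_m. -/
open MeasureTheory ProbabilityTheory Real Filter
open scoped ENNReal NNReal BigOperators

noncomputable section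

/-! The particle system started from `η₀^{⊗N}` is exchangeable: `R_{N,γ}` commutes with
permutations of the particles, so every `η₀^{⊗N} R^m` is invariant under them. Given a coupling
`P` of `η₀^{⊗N} R^m` with `η_m^{⊗N}`, reading off the `k` cyclically consecutive coordinates
starting at each `j ∈ ℤ/N` yields `N` couplings of the `k`-marginal with `η_m^{⊗k}`, whose costs
add up to `k` times the cost of `P`. Hence `N · W_{ρ_k} ≤ k · W_{ρ_N}`, and the propagation of
chaos estimate for the whole system gives the claim. -/

open Function

section Wasserstein

variable {E : Type*} [MeasurableSpace E] {μ ν : Measure E} {P : Measure (E × E)}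

lemma Coupling.isProbabilityMeasure_left (hP : P ∈ Coupling μ ν) : IsProbabilityMeasure μ :=
  have := hP.1
  hP.2.1 ▸ Measure.isProbabilityMeasure_map measurable_fst.aemeasurable

lemma Coupling.isProbabilityMeasure_right (hP : P ∈ Coupling μ ν) : IsProbabilityMeasure ν :=
  have := hP.1
  hP.2.2 ▸ Measure.isProbabilityMeasure_map measurable_snd.aemeasurable

lemma prod_mem_coupling [IsProbabilityMeasure μ] [IsProbabilityMeasure ν] :
    μ.prod ν ∈ Coupling μ ν :=
  ⟨inferInstance, by simp, by simp⟩

lemma map_prodMap_mem_coupling {F : Type*} [MeasurableSpace F] {f g : E → F}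
    (hf : Measurable f) (hg : Measurable g) (hP : P ∈ Coupling μ ν) :
    P.map (Prod.map f g) ∈ Coupling (μ.map f) (ν.map g) := by
  obtain ⟨hP, rfl, rfl⟩ := hP
  refine ⟨Measure.isProbabilityMeasure_map (hf.prodMap hg).aemeasurable, ?_, ?_⟩
  · rw [Measure.map_map measurable_fst (hf.prodMap hg), Measure.map_map hf measurable_fst]
    rfl
  · rw [Measure.map_map measurable_snd (hf.prodMap hg), Measure.map_map hg measurable_snd]
    rfl

variable {c : E → E → ℝ}

lemma wass_nonneg (hc : ∀ x y, 0 ≤ c x y) : 0 ≤ Wass c μ ν :=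
  Real.sInf_nonneg <| by
    rintro _ ⟨P, -, rfl⟩
    exact integral_nonneg fun z => hc z.1 z.2

lemma wass_le_integral (hc : ∀ x y, 0 ≤ c x y) (hP : P ∈ Coupling μ ν) :
    Wass c μ ν ≤ ∫ z, c z.1 z.2 ∂P :=
  csInf_le ⟨0, by rintro _ ⟨P, -, rfl⟩; exact integral_nonneg fun z => hc z.1 z.2⟩ ⟨P, hP, rfl⟩

lemma le_wass {r : ℝ} (hne : (Coupling μ ν).Nonempty)
    (h : ∀ P ∈ Coupling μ ν, r ≤ ∫ z, c z.1 z.2 ∂P) : r ≤ Wass c μ ν :=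
  le_csInf (hne.image _) <| by
    rintro _ ⟨P, hP, rfl⟩
    exact h P hP

lemma wass_eq_zero_of_not_nonempty (h : ¬(Coupling μ ν).Nonempty) : Wass c μ ν = 0 := by
  rw [Wass, Set.not_nonempty_iff_eq_empty.mp h, Set.image_empty, Real.sInf_empty]

end Wasserstein

section Exchangeable

variable {X ι : Type*} [MeasurableSpace X]

def IsExchangeable (μ : Measure (ι → X)) : Prop :=
  ∀ e : Equiv.Perm ι, μ.map (· ∘ e) = μ

lemma measurable_comp_right {ι' : Type*} (f : ι' → ι) : Measurable fun x : ι → X => x ∘ f :=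
  measurable_pi_lambda _ fun _ => measurable_pi_apply _

lemma IsExchangeable.bind {μ : Measure (ι → X)} (hμ : IsExchangeable μ)
    {R : (ι → X) → Measure (ι → X)}
    (hR : ∀ x (e : Equiv.Perm ι), (R x).map (· ∘ e) = R (x ∘ e)) :
    IsExchangeable (μ.bind R) := by
  intro e
  by_cases hRm : AEMeasurable R μ
  swap
  · simp [Measure.bind, Measure.map_of_not_aemeasurable hRm]
  ext s hs
  have hRs : AEMeasurable (fun x => R x s) μ := (Measure.measurable_coe hs).comp_aemeasurable hRm
  rw [Measure.map_apply (measurable_comp_right e) hs,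
    Measure.bind_apply (measurable_comp_right e hs) hRm, Measure.bind_apply hs hRm]
  calc ∫⁻ x, R x ((· ∘ e) ⁻¹' s) ∂μ = ∫⁻ x, R (x ∘ e) s ∂μ := by
        simp_rw [← hR, Measure.map_apply (measurable_comp_right e) hs]
    _ = ∫⁻ x, R x s ∂(μ.map (· ∘ e)) :=
        (lintegral_map' ((hμ e).symm ▸ hRs) (measurable_comp_right e).aemeasurable).symm
    _ = ∫⁻ x, R x s ∂μ := by rw [hμ e]

lemma IsExchangeable.iterK {μ : Measure (ι → X)} (hμ : IsExchangeable μ)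
    {R : (ι → X) → Measure (ι → X)}
    (hR : ∀ x (e : Equiv.Perm ι), (R x).map (· ∘ e) = R (x ∘ e)) (m : ℕ) :
    IsExchangeable (iterK R m μ) := by
  induction m with
  | zero => exact hμ
  | succ m ih => exact ih.bind hR

variable [Fintype ι]

lemma MeasureTheory.Measure.pi_map_comp_perm (κ : ι → Measure X) [∀ i, SigmaFinite (κ i)]
    (e : Equiv.Perm ι) :
    (Measure.pi κ).map (· ∘ e) = Measure.pi (κ ∘ e) := by
  have h := Measure.pi_map_piCongrLeft e.symm (fun i => κ (e i))
  simp only [Equiv.apply_symm_apply] at h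
  convert h using 2
  · ext x i
    simp [MeasurableEquiv.piCongrLeft, Equiv.piCongrLeft_apply_eq_cast]
  · rfl

lemma isExchangeable_pi (η : Measure X) [SigmaFinite η] :
    IsExchangeable (Measure.pi fun _ : ι => η) :=
  Measure.pi_map_comp_perm _

lemma MeasureTheory.Measure.pi_map_comp_injective {ι' : Type*} [Fintype ι'] {f : ι' → ι}
    (hf : Injective f) (η : Measure X) [IsProbabilityMeasure η] :
    (Measure.pi fun _ : ι => η).map (· ∘ f) = Measure.pi fun _ : ι' => η := by
  classical
  refine (Measure.pi_eq fun A hA => ?_).symm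
  have hpre :
      (· ∘ f) ⁻¹' Set.univ.pi A = Set.univ.pi (Function.extend f A fun _ => Set.univ) := by
    ext x
    simp only [Set.mem_preimage, Set.mem_univ_pi, comp_apply]
    refine ⟨fun h i => ?_, fun h i => by simpa [hf.extend_apply] using h (f i)⟩
    by_cases hi : ∃ j, f j = i
    · obtain ⟨j, rfl⟩ := hi
      simpa [hf.extend_apply] using h j
    · simp [Function.extend_apply' _ _ _ hi]
  rw [Measure.map_apply (measurable_comp_right f) (.univ_pi hA), hpre, Measure.pi_pi]
  refine (Fintype.prod_of_injective f hf _ _ (fun i hi => ?_) fun j => ?_).symm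
  · rw [Function.extend_apply' _ _ _ (by simpa using hi), measure_univ]
  · rw [hf.extend_apply]

lemma MeasureTheory.Measure.isProbabilityMeasure_of_pi [Nonempty ι] {η : Measure X}
    [IsFiniteMeasure η] [IsProbabilityMeasure (Measure.pi fun _ : ι => η)] :
    IsProbabilityMeasure η := by
  have h := measure_univ (μ := Measure.pi fun _ : ι => η)
  rw [← Set.pi_univ, Measure.pi_pi, Finset.prod_const] at h
  have hcard := Finset.univ_nonempty (α := ι).card_ne_zero
  exact ⟨le_antisymm ((pow_le_one_iff hcard).mp h.le) ((one_le_pow_iff hcard).mp h.ge)⟩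

end Exchangeable

lemma Fin.sum_sum_add_castLE {M : Type*} [AddCommMonoid M] {k N : ℕ} [NeZero N] (h : k ≤ N)
    (f : Fin N → M) : ∑ j : Fin N, ∑ i : Fin k, f (j + Fin.castLE h i) = k • ∑ j, f j := by
  rw [Finset.sum_comm]
  have hshift := fun i : Fin k => Equiv.sum_comp (Equiv.addRight (Fin.castLE h i)) f
  simp only [Equiv.coe_addRight] at hshift
  simp [hshift]

def sumCost {X ι : Type*} [Fintype ι] (c : X → X → ℝ) (x y : ι → X) : ℝ := ∑ i, c (x i) (y i)

lemma sumCost_nonneg {X ι : Type*} [Fintype ι] {c : X → X → ℝ} (hc0 : ∀ x y, 0 ≤ c x y)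
    (x y : ι → X) : 0 ≤ sumCost c x y :=
  Finset.sum_nonneg fun _ _ => hc0 _ _

section Marginal

variable {X : Type*} [MeasurableSpace X] {c : X → X → ℝ} {B : ℝ}

lemma integrable_sumCost {ι : Type*} [Fintype ι] (hcB : ∀ x y, |c x y| ≤ B)
    (hcm : Measurable (uncurry c)) (P : Measure ((ι → X) × (ι → X))) [IsFiniteMeasure P] :
    Integrable (fun z => sumCost c z.1 z.2) P :=
  integrable_finsetSum _ fun i _ =>
    .of_bound (hcm.comp (f := fun z : (ι → X) × (ι → X) => (z.1 i, z.2 i))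
      (by fun_prop)).aestronglyMeasurable
      B (.of_forall fun z => hcB _ _)

lemma card_mul_wass_map_castLE_le (hc0 : ∀ x y, 0 ≤ c x y) (hcB : ∀ x y, |c x y| ≤ B)
    (hcm : Measurable (uncurry c)) {k N : ℕ} [NeZero N] (hkN : k ≤ N) {μ : Measure (Fin N → X)}
    (hμ : IsExchangeable μ) {η : Measure X} [IsProbabilityMeasure η]
    {P : Measure ((Fin N → X) × (Fin N → X))} (hP : P ∈ Coupling μ (Measure.pi fun _ => η)) :
    N * Wass (sumCost c) (μ.map (· ∘ Fin.castLE hkN)) (Measure.pi fun _ => η)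
      ≤ k * ∫ z, sumCost c z.1 z.2 ∂P := by
  have : IsProbabilityMeasure P := hP.1
  let shift (j : Fin N) (x : Fin N → X) : Fin k → X := x ∘ (Equiv.addLeft j ∘ Fin.castLE hkN)
  have hshift (j : Fin N) : Measurable (shift j) := measurable_comp_right _
  have hμj (j : Fin N) : μ.map (shift j) = μ.map (· ∘ Fin.castLE hkN) := by
    conv_rhs => rw [← hμ (Equiv.addLeft j), Measure.map_map (measurable_comp_right _)
      (measurable_comp_right _)]
    rfl
  have hcoup (j : Fin N) : P.map (Prod.map (shift j) (shift j))
      ∈ Coupling (μ.map (· ∘ Fin.castLE hkN)) (Measure.pi fun _ => η) := by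
    have h := map_prodMap_mem_coupling (hshift j) (hshift j) hP
    rwa [hμj, Measure.pi_map_comp_injective
      ((Equiv.addLeft j).injective.comp (Fin.castLE_injective hkN))] at h
  have hint (j : Fin N) : Integrable (fun z => sumCost c (shift j z.1) (shift j z.2)) P :=
    (integrable_sumCost hcB hcm _).comp_measurable ((hshift j).prodMap (hshift j))
  set W := Wass (sumCost c) (μ.map (· ∘ Fin.castLE hkN)) (Measure.pi fun _ => η)
  calc N * W = ∑ j : Fin N, W := by simp
    _ ≤ ∑ j : Fin N, ∫ z, sumCost c (shift j z.1) (shift j z.2) ∂P := by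
      refine Finset.sum_le_sum fun j _ => ?_
      have h := wass_le_integral (sumCost_nonneg hc0) (hcoup j)
      rwa [integral_map ((hshift j).prodMap (hshift j)).aemeasurable
        (integrable_sumCost hcB hcm _).aestronglyMeasurable] at h
    _ = ∫ z, ∑ j : Fin N, sumCost c (shift j z.1) (shift j z.2) ∂P :=
      (integral_finsetSum _ fun j _ => hint j).symm
    _ = ∫ z, k * sumCost c z.1 z.2 ∂P := by
      congr 1 with z
      rw [← nsmul_eq_mul]
      exact Fin.sum_sum_add_castLE hkN fun a => c (z.1 a) (z.2 a)
    _ = k * ∫ z, sumCost c z.1 z.2 ∂P := integral_const_mul _ _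

theorem wass_map_castLE_le (hc0 : ∀ x y, 0 ≤ c x y) (hcB : ∀ x y, |c x y| ≤ B)
    (hcm : Measurable (uncurry c)) {k N : ℕ} (hk : 0 < k) (hkN : k ≤ N)
    {μ : Measure (Fin N → X)} (hμ : IsExchangeable μ) (η : Measure X) [IsFiniteMeasure η] :
    Wass (sumCost c) (μ.map (· ∘ Fin.castLE hkN)) (Measure.pi fun _ => η)
      ≤ k / N * Wass (sumCost c) μ (Measure.pi fun _ => η) := by
  have hN : (0 : ℝ) < N := by exact_mod_cast hk.trans_le hkN
  have hWN := wass_nonneg (sumCost_nonneg hc0) (μ := μ) (ν := Measure.pi fun _ : Fin N => η)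
  by_cases hne : (Coupling (μ.map (· ∘ Fin.castLE hkN)) (Measure.pi fun _ => η)).Nonempty
  swap
  · rw [wass_eq_zero_of_not_nonempty hne]
    positivity
  obtain ⟨P₀, hP₀⟩ := hne
  have : NeZero k := ⟨hk.ne'⟩
  have : NeZero N := ⟨(hk.trans_le hkN).ne'⟩
  have := Coupling.isProbabilityMeasure_right hP₀
  have : IsProbabilityMeasure η := Measure.isProbabilityMeasure_of_pi (ι := Fin k)
  have := Coupling.isProbabilityMeasure_left hP₀
  have : IsProbabilityMeasure μ := Measure.isProbabilityMeasure_of_map (· ∘ Fin.castLE hkN)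
  have hk' : (0 : ℝ) < k := by exact_mod_cast hk
  set W := Wass (sumCost c) (μ.map (· ∘ Fin.castLE hkN)) (Measure.pi fun _ => η)
  have key : N * W / k ≤ Wass (sumCost c) μ (Measure.pi fun _ => η) :=
    le_wass ⟨_, prod_mem_coupling⟩ fun P hP =>
      (div_le_iff₀' hk').mpr (card_mul_wass_map_castLE_le hc0 hcB hcm hkN hμ hP)
  calc W = k / N * (N * W / k) := by field_simp
    _ ≤ _ := by gcongr

end Marginal

lemma MeasureTheory.Measure.bind_apply_univ_le {α β : Type*} [MeasurableSpace α] [MeasurableSpace β]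
    {μ : Measure α} {f : α → Measure β} (hμ : μ Set.univ ≤ 1) (hf : ∀ x, f x Set.univ ≤ 1) :
    μ.bind f Set.univ ≤ 1 :=
  calc μ.bind f Set.univ ≤ ∫⁻ x, f x Set.univ ∂μ := Measure.bind_apply_le f .univ
    _ ≤ ∫⁻ _, 1 ∂μ := lintegral_mono hf
    _ ≤ 1 := by rwa [lintegral_one]

section Model

variable {d : ℕ}

lemma continuous_tdist : Continuous fun p : Torus d × Torus d => tdist p.1 p.2 := by
  unfold tdist
  fun_prop

lemma tdist_nonneg (x y : Torus d) : 0 ≤ tdist x y := Real.sqrt_nonneg _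

lemma rho_nonneg {a : ℝ} (ha : 0 < a) (x y : Torus d) : 0 ≤ rho a x y := by
  have : Real.exp (-a * tdist x y) ≤ 1 :=
    Real.exp_le_one_iff.mpr (by nlinarith [tdist_nonneg x y])
  exact div_nonneg (by linarith) ha.le

lemma abs_rho_le {a : ℝ} (ha : 0 < a) (x y : Torus d) : |rho a x y| ≤ 1 / a := by
  rw [abs_of_nonneg (rho_nonneg ha x y), rho]
  gcongr
  linarith [Real.exp_pos (-a * tdist x y)]

lemma measurable_rho (a : ℝ) : Measurable (uncurry (rho a : Torus d → Torus d → ℝ)) := by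
  unfold rho
  exact (continuous_const.sub (continuous_tdist.const_mul (-a)).rexp).div_const a |>.measurable

lemma continuous_torusProj : Continuous (Torus.proj (d := d)) :=
  continuous_pi fun i => (AddCircle.continuous_mk' 1).comp (continuous_apply i)

instance : IsProbabilityMeasure (_root_.stdGaussian d) := by
  unfold _root_.stdGaussian
  infer_instance

instance (b : Torus d → Fin d → ℝ) (γ : ℝ) (x : Torus d) :
    IsProbabilityMeasure (eulerK b γ x) :=
  Measure.isProbabilityMeasure_map
    (continuous_const.add (continuous_torusProj.comp (by fun_prop))).measurable.aemeasurable

variable {lam : Torus d → ℝ} {γ : ℝ}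

lemma pkill_nonneg (hγ : 0 ≤ γ) {z : Torus d} (hz : 0 ≤ lam z) : 0 ≤ pkill lam γ z := by
  have : Real.exp (-(γ * lam z)) ≤ 1 := Real.exp_le_one_iff.mpr (by nlinarith)
  unfold pkill
  linarith

lemma pkill_le_one (z : Torus d) : pkill lam γ z ≤ 1 := by
  unfold pkill
  linarith [Real.exp_pos (-(γ * lam z))]

lemma lintegral_one_sub_pkill_add_lintegral_pkill (hlam : Measurable lam) (hlam0 : ∀ z, 0 ≤ lam z)
    (hγ : 0 ≤ γ) (ν : Measure (Torus d)) :
    ∫⁻ z, ENNReal.ofReal (1 - pkill lam γ z) ∂ν + ∫⁻ z, ENNReal.ofReal (pkill lam γ z) ∂ν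
      = ν Set.univ := by
  have hp : Measurable (pkill lam γ) := by unfold pkill; fun_prop
  rw [← lintegral_add_right _ hp.ennreal_ofReal, ← lintegral_one]
  refine lintegral_congr fun z => ?_
  rw [← ENNReal.ofReal_add (by linarith [pkill_le_one (lam := lam) (γ := γ) z])
    (pkill_nonneg hγ (hlam0 z)), sub_add_cancel, ENNReal.ofReal_one]

lemma Qker_apply_univ_le (b : Torus d → Fin d → ℝ) (hlam : Measurable lam)
    (hlam0 : ∀ z, 0 ≤ lam z) (hγ : 0 ≤ γ) {μ : Measure (Torus d)} (hμ : μ Set.univ ≤ 1)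
    (x : Torus d) : Qker b lam γ μ x Set.univ ≤ 1 := by
  have hK := lintegral_one_sub_pkill_add_lintegral_pkill hlam hlam0 hγ (eulerK b γ x)
  have hM := lintegral_one_sub_pkill_add_lintegral_pkill hlam hlam0 hγ (μ.bind (eulerK b γ))
  have hM1 : μ.bind (eulerK b γ) Set.univ ≤ 1 := Measure.bind_apply_univ_le hμ fun _ => prob_le_one
  rw [measure_univ] at hK
  set r := ∫⁻ z, ENNReal.ofReal (pkill lam γ z) ∂(μ.bind (eulerK b γ))
  set s := ∫⁻ z, ENNReal.ofReal (1 - pkill lam γ z) ∂(μ.bind (eulerK b γ))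
  have hr : r ≠ ⊤ := ne_top_of_le_ne_top ENNReal.one_ne_top (le_add_self.trans (hM.trans_le hM1))
  -- the geometric factor `∑ rᵏ = (1 - r)⁻¹` is offset by `s ≤ 1 - r`, as `s + r ≤ 1`
  have hs : (1 - r)⁻¹ * s ≤ 1 := by
    rw [mul_comm, ← div_eq_mul_inv]
    refine ENNReal.div_le_of_le_mul ?_
    rw [one_mul]
    exact ENNReal.le_sub_of_add_le_right hr (hM ▸ hM1)
  rw [Qker, Measure.add_apply, Measure.smul_apply, smul_eq_mul, withDensity_apply _ .univ,
    withDensity_apply _ .univ, Measure.restrict_univ, Measure.restrict_univ,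
    ENNReal.tsum_geometric, mul_assoc]
  calc _ ≤ ∫⁻ z, ENNReal.ofReal (1 - pkill lam γ z) ∂(eulerK b γ x)
        + (∫⁻ z, ENNReal.ofReal (pkill lam γ z) ∂(eulerK b γ x)) * 1 := by gcongr
    _ = 1 := by rw [mul_one, hK]

-- Only `≤ 1`: `Measure.bind` is `0` when the kernel is not a.e.-measurable.
lemma etaChain_apply_univ_le (b : Torus d → Fin d → ℝ) (hlam : Measurable lam)
    (hlam0 : ∀ z, 0 ≤ lam z) (hγ : 0 ≤ γ) {η0 : Measure (Torus d)} (hη0 : η0 Set.univ ≤ 1)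
    (m : ℕ) : etaChain b lam γ η0 m Set.univ ≤ 1 := by
  induction m with
  | zero => exact hη0
  | succ m ih => exact Measure.bind_apply_univ_le ih (Qker_apply_univ_le b hlam hlam0 hγ ih)

lemma emp_apply_univ_le {N : ℕ} (x : Fin N → Torus d) : emp x Set.univ ≤ 1 := by
  simp [emp]

lemma emp_comp_perm {N : ℕ} (x : Fin N → Torus d) (e : Equiv.Perm (Fin N)) :
    emp (x ∘ e) = emp x := by
  unfold emp
  congr 1
  exact Equiv.sum_comp e fun i => Measure.dirac (x i)

lemma map_Rker_comp_perm (b : Torus d → Fin d → ℝ) (hlam : Measurable lam)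
    (hlam0 : ∀ z, 0 ≤ lam z) (hγ : 0 ≤ γ) {N : ℕ} (x : Fin N → Torus d) (e : Equiv.Perm (Fin N)) :
    (Rker b lam γ x).map (· ∘ e) = Rker b lam γ (x ∘ e) := by
  have (i : Fin N) : IsFiniteMeasure (Qker b lam γ (emp x) (x i)) :=
    ⟨(Qker_apply_univ_le b hlam hlam0 hγ (emp_apply_univ_le x) _).trans_lt ENNReal.one_lt_top⟩
  rw [Rker, Rker, emp_comp_perm]
  exact Measure.pi_map_comp_perm _ e

end Model

theorem marginal_propagation_of_chaos_general
    {d : ℕ} (b : Torus d → Fin d → ℝ)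
    (a c₁ γ₀ : ℝ) (ha : 0 < a)
    (lam : Torus d → ℝ) (hlamc : Continuous lam) (hlam0 : ∀ z, 0 ≤ lam z)
    (L : ℝ)
    (c₂ : ℝ)
    (C₂ : ℝ)
    (hC₂ : ∀ N : ℕ, ∀ γ ∈ Set.Ioc (0 : ℝ) γ₀, ∀ m : ℕ,
      ∀ η0 : Measure (Torus d), IsProbabilityMeasure η0 →
        Wass (rhoN a) (iterK (Rker b lam γ) m (Measure.pi fun _ : Fin N => η0))
            (Measure.pi fun _ : Fin N => etaChain b lam γ η0 m)
          ≤ C₂ * N * alphaRate d N * γ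
              * ∑ s ∈ Finset.range m, (1 - γ * kap lam c₁ c₂ L γ) ^ s) :
    ∀ N : ℕ, ∀ γ ∈ Set.Ioc (0 : ℝ) γ₀, ∀ m : ℕ,
      ∀ η0 : Measure (Torus d), IsProbabilityMeasure η0 →
      ∀ k : ℕ, 1 ≤ k → ∀ hkN : k ≤ N,
        Wass (rhoN a)
            ((iterK (Rker b lam γ) m (Measure.pi fun _ : Fin N => η0)).map
              (fun x (i : Fin k) => x (Fin.castLE hkN i)))
            (Measure.pi fun _ : Fin k => etaChain b lam γ η0 m)
          ≤ C₂ * k * alphaRate d N * γ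
              * ∑ s ∈ Finset.range m, (1 - γ * kap lam c₁ c₂ L γ) ^ s := by
  intro N γ hγ m η0 hη0 k hk hkN
  have hN : (N : ℝ) ≠ 0 := by norm_cast; omega
  have hγ0 : 0 ≤ γ := hγ.1.le
  have : IsFiniteMeasure (etaChain b lam γ η0 m) :=
    ⟨(etaChain_apply_univ_le b hlamc.measurable hlam0 hγ0 prob_le_one m).trans_lt
      ENNReal.one_lt_top⟩
  have hexch : IsExchangeable (iterK (Rker b lam γ) m (Measure.pi fun _ : Fin N => η0)) :=
    (isExchangeable_pi η0).iterK (map_Rker_comp_perm b hlamc.measurable hlam0 hγ0) m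
  calc _ ≤ k / N * Wass (rhoN a) (iterK (Rker b lam γ) m (Measure.pi fun _ : Fin N => η0))
          (Measure.pi fun _ : Fin N => etaChain b lam γ η0 m) :=
        wass_map_castLE_le (rho_nonneg ha) (abs_rho_le ha) (measurable_rho a) hk hkN hexch _
    _ ≤ k / N * (C₂ * N * alphaRate d N * γ
          * ∑ s ∈ Finset.range m, (1 - γ * kap lam c₁ c₂ L γ) ^ s) := by
        gcongr
        exact hC₂ N γ hγ m η0 hη0
    _ = _ := by field_simp

/-- Marginal propagation of chaos: with the constant `C₂` of the propagation-of-chaos estimate,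
`W_{ρ_k}(Law(X_{1,m},…,X_{k,m}), η_m^{⊗k}) ≤ C₂ k α(N) γ ∑_{s=1}^m (1 − γκ)^{s−1}`. -/
theorem marginal_propagation_of_chaos
    {d : ℕ} (b : Torus d → Fin d → ℝ) (hb : IsC1Drift b)
    (a c₁ γ₀ : ℝ) (ha : 0 < a) (hc₁ : 0 < c₁) (hγ₀ : 0 < γ₀)
    (hK : EulerContract b a c₁ γ₀)
    (lam : Torus d → ℝ) (hlamc : Continuous lam) (hlam0 : ∀ z, 0 ≤ lam z)
    (L : ℝ) (hL : 0 ≤ L) (hLip : LipDrift L lam)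
    (c₂ : ℝ) (hc₂pos : 0 < c₂) (hc₂ : RContract b lam a c₁ c₂ L γ₀)
    (C₂ : ℝ) (hC₂pos : 0 < C₂)
    (hC₂ : ∀ N : ℕ, ∀ γ ∈ Set.Ioc (0 : ℝ) γ₀, ∀ m : ℕ,
      ∀ η0 : Measure (Torus d), IsProbabilityMeasure η0 →
        Wass (rhoN a) (iterK (Rker b lam γ) m (Measure.pi fun _ : Fin N => η0))
            (Measure.pi fun _ : Fin N => etaChain b lam γ η0 m)
          ≤ C₂ * N * alphaRate d N * γ
              * ∑ s ∈ Finset.range m, (1 - γ * kap lam c₁ c₂ L γ) ^ s) :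
    ∀ N : ℕ, ∀ γ ∈ Set.Ioc (0 : ℝ) γ₀, ∀ m : ℕ,
      ∀ η0 : Measure (Torus d), IsProbabilityMeasure η0 →
      ∀ k : ℕ, 1 ≤ k → ∀ hkN : k ≤ N,
        Wass (rhoN a)
            ((iterK (Rker b lam γ) m (Measure.pi fun _ : Fin N => η0)).map
              (fun x (i : Fin k) => x (Fin.castLE hkN i)))
            (Measure.pi fun _ : Fin k => etaChain b lam γ η0 m)
          ≤ C₂ * k * alphaRate d N * γ
              * ∑ s ∈ Finset.range m, (1 - γ * kap lam c₁ c₂ L γ) ^ s :=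
  marginal_propagation_of_chaos_general b a c₁ γ₀ ha lam hlamc hlam0 L c₂ C₂ hC₂

end
end
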